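/- If ε_1, ..., ε_n are independent standard Gumbel random variables and v_1, ..., v_n ∈ R, then max_j (v_j + ε_j) is distributed as Gumbel with location ln(Σ_j exp(v_j)); that is, P(max_j (v_j + ε_j) ≤ t) = exp(-exp(-(t - ln Σ_j exp(v_j)))). -/

import Mathlib

open MeasureTheory ProbabilityTheory

/-!
The event `max_j (v_j + ε_j) ≤ t` is the intersection of the events `ε_j ≤ t - v_j`, so by
independence its probability is `∏_j exp (-exp (v_j) exp (-t)) = exp (-(∑_j exp v_j) exp (-t))`,
which is the Gumbel distribution function with location `log ∑_j exp v_j`.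
-/

noncomputable def gumbelCDF (m t : ℝ) : ℝ :=
  Real.exp (-Real.exp (-(t - m)))

lemma gumbelCDF_nonneg (m t : ℝ) : 0 ≤ gumbelCDF m t :=
  (Real.exp_pos _).le

lemma prod_gumbelCDF {ι : Type*} {s : Finset ι} (hs : s.Nonempty) (v : ι → ℝ) (t : ℝ) :
    ∏ j ∈ s, gumbelCDF (v j) t = gumbelCDF (Real.log (∑ j ∈ s, Real.exp (v j))) t := by
  have hsum : 0 < ∑ j ∈ s, Real.exp (v j) := Finset.sum_pos (fun j _ => Real.exp_pos _) hs
  have hshift : ∀ m, Real.exp (-(t - m)) = Real.exp m * Real.exp (-t) := fun m => by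
    rw [← Real.exp_add]; ring_nf
  simp only [gumbelCDF, ← Real.exp_sum, hshift, Real.exp_log hsum, Finset.sum_neg_distrib,
    Finset.sum_mul]

lemma ProbabilityTheory.iIndepFun.measure_sup'_le {Ω ι β : Type*} [MeasurableSpace Ω]
    {μ : Measure Ω} [LinearOrder β] [TopologicalSpace β] [ClosedIicTopology β] [MeasurableSpace β]
    [OpensMeasurableSpace β] {s : Finset ι} (hs : s.Nonempty) {X : ι → Ω → β}
    (hX : iIndepFun X μ) (t : β) :
    μ {ω | s.sup' hs (fun i => X i ω) ≤ t} = ∏ i ∈ s, μ {ω | X i ω ≤ t} := by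
  have hset : {ω | s.sup' hs (fun i => X i ω) ≤ t} = ⋂ i ∈ s, X i ⁻¹' Set.Iic t := by
    ext ω
    simp [Finset.sup'_le_iff]
  rw [hset, hX.meas_biInter fun i _ => ⟨Set.Iic t, measurableSet_Iic, rfl⟩]
  rfl

theorem gumbel_max_stability_general
    {Ω : Type*} [MeasurableSpace Ω] (μ : Measure Ω)
    {n : ℕ} [NeZero n]
    (v : Fin n → ℝ) (ε : Fin n → Ω → ℝ)
    (hindep : iIndepFun ε μ)
    (hgumbel : ∀ j, ∀ t : ℝ,
      μ {ω | ε j ω ≤ t} = ENNReal.ofReal (Real.exp (-Real.exp (-t))))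
    (t : ℝ) :
    μ {ω | Finset.univ.sup' Finset.univ_nonempty (fun j => v j + ε j ω) ≤ t} =
      ENNReal.ofReal
        (Real.exp (-Real.exp (-(t - Real.log (∑ j, Real.exp (v j)))))) := by
  have hshifted : iIndepFun (fun j ω => v j + ε j ω) μ :=
    hindep.comp (fun j x => v j + x) fun j => measurable_const_add (v j)
  have hmarginal : ∀ j, μ {ω | v j + ε j ω ≤ t} = ENNReal.ofReal (gumbelCDF (v j) t) := by
    intro j
    simp only [← le_sub_iff_add_le', hgumbel, gumbelCDF]
  rw [hshifted.measure_sup'_le, Finset.prod_congr rfl fun j _ => hmarginal j,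
    ← ENNReal.ofReal_prod_of_nonneg fun j _ => gumbelCDF_nonneg (v j) t,
    prod_gumbelCDF Finset.univ_nonempty]
  rfl

/-- Max-stability of the Gumbel distribution: if `ε_1, …, ε_n` are independent standard
Gumbel random variables and `v_j ∈ ℝ`, then `max_j (v_j + ε_j)` is Gumbel with location
`ln Σ_j exp(v_j)`:  `P(max_j (v_j + ε_j) ≤ t) = exp(-exp(-(t - ln Σ_j exp(v_j))))`. -/
theorem gumbel_max_stability
    {Ω : Type*} [MeasurableSpace Ω] (μ : Measure Ω) [IsProbabilityMeasure μ]
    {n : ℕ} [NeZero n]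
    (v : Fin n → ℝ) (ε : Fin n → Ω → ℝ)
    (hmeas : ∀ j, Measurable (ε j))
    (hindep : iIndepFun ε μ)
    (hgumbel : ∀ j, ∀ t : ℝ,
      μ {ω | ε j ω ≤ t} = ENNReal.ofReal (Real.exp (-Real.exp (-t))))
    (t : ℝ) :
    μ {ω | Finset.univ.sup' Finset.univ_nonempty (fun j => v j + ε j ω) ≤ t} =
      ENNReal.ofReal
        (Real.exp (-Real.exp (-(t - Real.log (∑ j, Real.exp (v j)))))) :=
  gumbel_max_stability_general μ v ε hindep hgumbel t
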